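/- arXiv:2505.07891 — 3 statements merged into one kernel-verified Lean document; each statement's English description precedes it below -/
import Mathlib

section
/- If P is an n×n column-stochastic matrix with complex eigenvalues 1, λ_2, ..., λ_n (with multiplicity), u is a probability vector, e the all-ones vector, E = u·eᵀ, and d ∈ (0,1), then the eigenvalues of P' = d·P + (1-d)·E are 1, d·λ_2, ..., d·λ_n; in particular the second-largest eigenvalue modulus of P' is at most d times that of P. -/
open Polynomial Matrix

private lemma eval_charpoly_aux {m : ℕ} (M : Matrix (Fin m) (Fin m) ℂ) (x : ℂ) :
    (M.charpoly).eval x = (x • (1 : Matrix (Fin m) (Fin m) ℂ) - M).det := by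
  rw [Matrix.charpoly, ← Polynomial.coe_evalRingHom, RingHom.map_det]
  congr 1
  ext i j
  rcases eq_or_ne i j with rfl | h
  · simp [Matrix.charmatrix_apply_eq, Matrix.one_apply_eq]
  · simp [Matrix.charmatrix_apply_ne _ _ _ h, Matrix.one_apply_ne h]

private lemma prod_scale_aux (s : Multiset ℂ) (d x : ℂ) (hd : d ≠ 0) :
    d ^ Multiset.card s * (s.map fun z => x / d - z).prod = (s.map fun z => x - d * z).prod := by
  rw [← Multiset.prod_replicate, ← Multiset.map_const', ← Multiset.prod_map_mul]
  congr 1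
  apply Multiset.map_congr rfl
  intro z _
  field_simp

/-- If the complex eigenvalues of the column-stochastic matrix `P` (counted with algebraic
multiplicity, i.e., the roots of its characteristic polynomial) are `1, λ₂, …, λₙ`, then the
eigenvalues of `P' = d P + (1-d) u eᵀ` are `1, d λ₂, …, d λₙ`; in particular the
second-largest eigenvalue modulus of `P'` is at most `d` times that of `P`. -/
theorem stmt_5 (n : ℕ) (P : Matrix (Fin n) (Fin n) ℝ)
    (hP0 : ∀ i j, 0 ≤ P i j) (hP1 : ∀ j, ∑ i, P i j = 1)
    (u : Fin n → ℝ) (hu0 : ∀ i, 0 ≤ u i) (hu1 : ∑ i, u i = 1)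
    (d : ℝ) (hd0 : 0 < d) (hd1 : d < 1)
    (E P' : Matrix (Fin n) (Fin n) ℝ)
    (hE : ∀ i j, E i j = u i) (hP' : P' = d • P + (1 - d) • E)
    (s : Multiset ℂ)
    (hs : (P.map (Complex.ofReal ·)).charpoly.roots = 1 ::ₘ s) :
    (P'.map (Complex.ofReal ·)).charpoly.roots
        = 1 ::ₘ s.map (fun z => (d : ℂ) * z) ∧
    ∀ b : ℝ, (∀ z ∈ s, ‖z‖ ≤ b) →
      ∀ z ∈ s.map (fun z => (d : ℂ) * z), ‖z‖ ≤ d * b := by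
  have habs : ∀ b : ℝ, (∀ z ∈ s, ‖z‖ ≤ b) →
      ∀ z ∈ s.map (fun z => (d : ℂ) * z), ‖z‖ ≤ d * b := by
    intro b hb z hz
    obtain ⟨w, hw, rfl⟩ := Multiset.mem_map.mp hz
    rw [norm_mul, Complex.norm_real, Real.norm_eq_abs, abs_of_pos hd0]
    exact mul_le_mul_of_nonneg_left (hb w hw) hd0.le
  refine ⟨?_, habs⟩
  set A : Matrix (Fin n) (Fin n) ℂ := P.map (Complex.ofReal ·) with hAdef
  have hdc0 : (d : ℂ) ≠ 0 := by
    exact_mod_cast hd0.ne'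
  have hA1 : ∀ j, ∑ i, A i j = 1 := by
    intro j
    have h := hP1 j
    simp only [hAdef, Matrix.map_apply]
    exact_mod_cast congrArg (Complex.ofReal ·) h
  have hmonic : A.charpoly.Monic := A.charpoly_monic
  have hdeg : A.charpoly.natDegree = n := by
    rw [Matrix.charpoly_natDegree_eq_dim, Fintype.card_fin]
  have hcard : Multiset.card s + 1 = n := by
    have h := Polynomial.splits_iff_card_roots.mp (IsAlgClosed.splits A.charpoly)
    rw [hs, hdeg, Multiset.card_cons] at h
    exact h
  have hfactA : A.charpoly = ((1 ::ₘ s).map fun z => X - C z).prod := by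
    rw [← hs]
    exact ((IsAlgClosed.splits _).eq_prod_roots_of_monic hmonic)
  -- the target polynomial
  set t : Multiset ℂ := 1 ::ₘ s.map (fun z => (d : ℂ) * z) with ht
  have key : (P'.map (Complex.ofReal ·)).charpoly = (t.map fun z => X - C z).prod := by
    apply Polynomial.eq_of_infinite_eval_eq
    have hfin : (({x | IsRoot (((d:ℂ) • A).charpoly) x} ∪ {(d:ℂ)}) : Set ℂ).Finite :=
      (Polynomial.finite_setOf_isRoot (Matrix.charpoly_monic _).ne_zero).union
        (Set.finite_singleton _)
    apply Set.Infinite.mono _ hfin.infinite_compl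
    intro x hx
    simp only [Set.mem_compl_iff, Set.mem_union, Set.mem_setOf_eq, Set.mem_singleton_iff,
      not_or] at hx
    obtain ⟨hx1, hx2⟩ := hx
    set M : Matrix (Fin n) (Fin n) ℂ := x • (1 : Matrix (Fin n) (Fin n) ℂ) - (d:ℂ) • A
      with hMdef
    have hxd : x - (d:ℂ) ≠ 0 := sub_ne_zero.mpr hx2
    have hdetM_ne : M.det ≠ 0 := by
      have := eval_charpoly_aux ((d:ℂ) • A) x
      rw [hMdef]
      rw [← this]
      exact hx1
    -- value of det M
    have hQ : M.det = (x - (d:ℂ)) * (s.map fun z => x - (d:ℂ) * z).prod := by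
      have h1 : M = (d:ℂ) • ((x / (d:ℂ)) • (1 : Matrix (Fin n) (Fin n) ℂ) - A) := by
        ext i j
        rcases eq_or_ne i j with rfl | h
        · simp [hMdef, Matrix.one_apply_eq, mul_sub, mul_div_cancel₀ _ hdc0,
            mul_comm (d:ℂ) (x / (d:ℂ)), div_mul_cancel₀ _ hdc0]
        · simp [hMdef, Matrix.one_apply_ne h]
      rw [h1, Matrix.det_smul, ← eval_charpoly_aux, hfactA]
      rw [Polynomial.eval_multiset_prod, Multiset.map_map]
      simp only [Function.comp, eval_sub, eval_X, eval_C]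
      rw [Multiset.map_cons, Multiset.prod_cons, Fintype.card_fin, ← hcard, pow_succ]
      have := prod_scale_aux s (d:ℂ) x hdc0
      calc (d:ℂ) ^ Multiset.card s * (d:ℂ) *
            ((x / (d:ℂ) - 1) * (s.map fun z => x / (d:ℂ) - z).prod)
          = ((d:ℂ) * (x / (d:ℂ) - 1)) *
            ((d:ℂ) ^ Multiset.card s * (s.map fun z => x / (d:ℂ) - z).prod) := by ring
        _ = (x - (d:ℂ)) * (s.map fun z => x - (d:ℂ) * z).prod := by
            rw [this, mul_sub, mul_div_cancel₀ _ hdc0, mul_one]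
    -- column sums of M and M⁻¹
    have hMsum : ∀ j, ∑ i, M i j = x - (d:ℂ) := by
      intro j
      have h : ∀ i, M i j = x * (if i = j then (1:ℂ) else 0) - (d:ℂ) * A i j := by
        intro i
        simp [hMdef, Matrix.one_apply]
      simp only [h]
      rw [Finset.sum_sub_distrib, ← Finset.mul_sum, ← Finset.mul_sum, hA1 j]
      simp
    have hinv : ∀ j, ∑ i, M⁻¹ i j = (x - (d:ℂ))⁻¹ := by
      intro j
      have h1 : ∑ k, (M * M⁻¹) k j = 1 := by
        rw [Matrix.mul_nonsing_inv M hdetM_ne.isUnit]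
        simp [Matrix.one_apply]
      have h2 : ∑ k, (M * M⁻¹) k j = (x - (d:ℂ)) * ∑ i, M⁻¹ i j := by
        simp only [Matrix.mul_apply]
        rw [Finset.sum_comm, Finset.mul_sum]
        apply Finset.sum_congr rfl
        intro i _
        rw [← Finset.sum_mul, hMsum i]
      rw [h2] at h1
      field_simp at h1 ⊢
      linear_combination h1
    -- split P' as rank-one update
    set w : Fin n → ℂ := fun i => ((d:ℂ) - 1) * (u i : ℂ) with hw
    have hsplit : x • (1 : Matrix (Fin n) (Fin n) ℂ) - P'.map (Complex.ofReal ·)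
        = M + Matrix.replicateCol Unit w * Matrix.replicateRow Unit (fun _ => (1:ℂ)) := by
      ext i j
      simp only [Matrix.sub_apply, Matrix.add_apply, Matrix.smul_apply, Matrix.mul_apply,
        Fintype.sum_unique, Matrix.replicateCol_apply, Matrix.replicateRow_apply, Matrix.map_apply, hMdef,
        hP', hw, hAdef, Matrix.add_apply, Matrix.smul_apply, hE, smul_eq_mul]
      push_cast
      ring
    have hdl := Matrix.det_add_replicateCol_mul_replicateRow (ι := Unit) (A := M) hdetM_ne.isUnit w
      (fun _ => (1:ℂ))
    have hentry : det ((1 : Matrix Unit Unit ℂ) +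
        (Matrix.replicateRow Unit (fun _ => (1:ℂ)) : Matrix Unit (Fin n) ℂ) * M⁻¹ * Matrix.replicateCol Unit w)
        = 1 + (x - (d:ℂ))⁻¹ * ((d:ℂ) - 1) := by
      rw [Matrix.det_unique]
      simp only [Matrix.add_apply, Matrix.one_apply_eq, Matrix.mul_apply,
        Matrix.replicateRow_apply, Matrix.replicateCol_apply, one_mul, hw]
      congr 1
      calc ∑ j, (∑ i, M⁻¹ i j) * (((d:ℂ) - 1) * (u j : ℂ))
          = ∑ j, (x - (d:ℂ))⁻¹ * (((d:ℂ) - 1) * (u j : ℂ)) := by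
            apply Finset.sum_congr rfl
            intro j _
            rw [hinv j]
        _ = (x - (d:ℂ))⁻¹ * ((d:ℂ) - 1) * ∑ j, (u j : ℂ) := by
            rw [Finset.mul_sum]
            apply Finset.sum_congr rfl
            intro j _
            ring
        _ = (x - (d:ℂ))⁻¹ * ((d:ℂ) - 1) := by
            have : (∑ j, (u j : ℂ)) = 1 := by exact_mod_cast congrArg (Complex.ofReal ·) hu1
            rw [this, mul_one]
    -- put everything together
    show eval x _ = eval x _
    rw [eval_charpoly_aux, hsplit, hdl, hentry, hQ]
    rw [Polynomial.eval_multiset_prod, Multiset.map_map]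
    simp only [Function.comp, eval_sub, eval_X, eval_C, ht]
    rw [Multiset.map_cons, Multiset.prod_cons, Multiset.map_map]
    simp only [Function.comp]
    field_simp
    ring
  rw [key, Polynomial.roots_multiset_prod_X_sub_C]
end

section
/- A column-stochastic matrix with strictly positive entries has a unique stationary distribution, i.e., a unique probability vector π with Mπ = π, and this π has strictly positive entries. -/
open Finset
open scoped NNReal ENNReal

lemma key_ineq {n : ℕ} (M : Matrix (Fin n) (Fin n) ℝ) (c : ℝ)
    (hc : ∀ i j, c ≤ M i j) (hM1 : ∀ j, ∑ i, M i j = 1)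
    (x : Fin n → ℝ) (hx : ∑ j, x j = 0) :
    ∑ i, |∑ j, M i j * x j| ≤ (1 - n * c) * ∑ j, |x j| := by
  have h1 : ∀ i, (∑ j, M i j * x j) = ∑ j, (M i j - c) * x j := by
    intro i
    simp [sub_mul, Finset.sum_sub_distrib, ← Finset.mul_sum, hx]
  calc ∑ i, |∑ j, M i j * x j| = ∑ i, |∑ j, (M i j - c) * x j| := by simp only [h1]
    _ ≤ ∑ i, ∑ j, (M i j - c) * |x j| := by
        refine Finset.sum_le_sum fun i _ => (Finset.abs_sum_le_sum_abs _ _).trans ?_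
        refine Finset.sum_le_sum fun j _ => ?_
        rw [abs_mul, abs_of_nonneg (sub_nonneg.2 (hc i j))]
    _ = ∑ j, (∑ i, (M i j - c)) * |x j| := by
        rw [Finset.sum_comm]
        refine Finset.sum_congr rfl fun j _ => ?_
        rw [Finset.sum_mul]
    _ = ∑ j, (1 - n * c) * |x j| := by
        refine Finset.sum_congr rfl fun j _ => ?_
        rw [Finset.sum_sub_distrib, hM1 j]
        simp [mul_comm]
    _ = (1 - n * c) * ∑ j, |x j| := (Finset.mul_sum _ _ _).symm

lemma exists_statdist (n : ℕ) (hn : 0 < n) (M : Matrix (Fin n) (Fin n) ℝ)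
    (hM0 : ∀ i j, 0 < M i j) (hM1 : ∀ j, ∑ i, M i j = 1) :
    ∃ π : Fin n → ℝ, (∀ i, 0 ≤ π i) ∧ (∑ i, π i = 1) ∧ M.mulVec π = π := by
  haveI : NeZero n := ⟨hn.ne'⟩
  -- the simplex in ℓ¹
  set E := PiLp 1 (fun _ : Fin n => ℝ)
  set S : Set E := {p | (∀ i, 0 ≤ p i) ∧ ∑ i, p i = 1} with hS
  have hcont : ∀ i : Fin n, Continuous fun p : E => p i := fun i =>
    (continuous_apply i).comp (PiLp.continuous_ofLp 1 _)
  have hclosed : IsClosed S := by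
    have h1 : IsClosed {p : E | ∀ i, 0 ≤ p i} := by
      have : {p : E | ∀ i, 0 ≤ p i} = ⋂ i, {p : E | 0 ≤ p i} := by ext p; simp [Set.mem_iInter]
      rw [this]
      exact isClosed_iInter fun i => isClosed_le continuous_const (hcont i)
    have h2 : IsClosed {p : E | ∑ i, p i = 1} :=
      isClosed_eq (by exact continuous_finset_sum _ fun i _ => hcont i) continuous_const
    exact h1.inter h2
  haveI : CompleteSpace S := hclosed.completeSpace_coe
  have hmem_unif : (WithLp.toLp 1 (fun _ => (n : ℝ)⁻¹ : Fin n → ℝ) : E) ∈ S := by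
    constructor
    · intro i; positivity
    · simp [Finset.card_univ, mul_inv_cancel₀ (Nat.cast_ne_zero.2 hn.ne' : (n:ℝ) ≠ 0)]
  haveI : Nonempty S := ⟨⟨_, hmem_unif⟩⟩
  -- the map
  have hmaps : ∀ p : E, p ∈ S → (WithLp.toLp 1 (M.mulVec p : Fin n → ℝ) : E) ∈ S := by
    intro p hp
    refine ⟨fun i => ?_, ?_⟩
    · show 0 ≤ ∑ j, M i j * p j
      exact Finset.sum_nonneg fun j _ => mul_nonneg (hM0 i j).le (hp.1 j)
    show ∑ i, ∑ j, M i j * p j = 1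
    rw [Finset.sum_comm]
    have : ∀ j : Fin n, ∑ i, M i j * p j = p j := by
      intro j; rw [← Finset.sum_mul, hM1 j, one_mul]
    simp only [this]
    exact hp.2
  set T : S → S := fun p => ⟨(WithLp.toLp 1 (M.mulVec p : Fin n → ℝ) : E), hmaps p p.2⟩ with hT
  -- contraction constant
  set c : ℝ := Finset.univ.inf' (by simp) (fun q : Fin n × Fin n => M q.1 q.2) with hcdef
  have hcpos : 0 < c := by
    rw [hcdef]
    exact (Finset.lt_inf'_iff _).2 fun q _ => hM0 q.1 q.2
  have hcle : ∀ i j, c ≤ M i j := fun i j =>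
    Finset.inf'_le _ (Finset.mem_univ (i, j))
  have hnc : (n : ℝ) * c ≤ 1 := by
    have j0 : Fin n := ⟨0, hn⟩
    calc (n : ℝ) * c = ∑ _i : Fin n, c := by simp [Finset.card_univ, mul_comm]
      _ ≤ ∑ i, M i j0 := Finset.sum_le_sum fun i _ => hcle i j0
      _ = 1 := hM1 j0
  set K : ℝ≥0 := (1 - n * c).toNNReal with hK
  have hK1 : K < 1 := by
    rw [← NNReal.coe_lt_coe, hK, Real.coe_toNNReal']
    have h0 : 0 < (n : ℝ) * c := by positivity
    simp only [NNReal.coe_one]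
    exact max_lt (by linarith) one_pos
  have hdist : ∀ p q : E, dist p q = ∑ i, |p i - q i| := by
    intro p q
    rw [PiLp.dist_eq_sum (by norm_num : 0 < (1 : ℝ≥0∞).toReal)]
    simp [Real.dist_eq, ENNReal.toReal_one, Real.rpow_one]
  have hlip : LipschitzWith K T := by
    refine LipschitzWith.of_dist_le_mul fun p q => ?_
    rw [Subtype.dist_eq, Subtype.dist_eq, hdist, hdist]
    have hsum0 : ∑ j, ((p : E) j - (q : E) j) = 0 := by
      rw [Finset.sum_sub_distrib, p.2.2, q.2.2, sub_self]
    have hkey := key_ineq M c hcle hM1 (fun j => (p : E) j - (q : E) j) hsum0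
    have heq : ∀ i, ((T p : E) i - (T q : E) i) = ∑ j, M i j * ((p : E) j - (q : E) j) := by
      intro i
      show M.mulVec p i - M.mulVec q i = _
      simp [Matrix.mulVec, dotProduct, mul_sub, Finset.sum_sub_distrib]
    calc ∑ i, |(T p : E) i - (T q : E) i|
        = ∑ i, |∑ j, M i j * ((p : E) j - (q : E) j)| := by simp only [heq]
      _ ≤ (1 - n * c) * ∑ j, |(p : E) j - (q : E) j| := hkey
      _ ≤ (K : ℝ) * ∑ j, |(p : E) j - (q : E) j| := by
          refine mul_le_mul_of_nonneg_right ?_ (Finset.sum_nonneg fun j _ => abs_nonneg _)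
          rw [hK, Real.coe_toNNReal']
          exact le_max_left _ _
  have hC : ContractingWith K T := ⟨hK1, hlip⟩
  obtain ⟨π₀, hfix⟩ := hC.exists_fixedPoint (Classical.arbitrary S) (by
    exact edist_ne_top _ _)
  refine ⟨(π₀ : E), π₀.2.1, π₀.2.2, ?_⟩
  have := congrArg Subtype.val hfix.1
  exact congrArg WithLp.ofLp this

/-- A column-stochastic matrix with strictly positive entries has a unique stationary
distribution, and this stationary distribution has strictly positive entries. -/
theorem stmt_6 (n : ℕ) (hn : 0 < n) (M : Matrix (Fin n) (Fin n) ℝ)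
    (hM0 : ∀ i j, 0 < M i j) (hM1 : ∀ j, ∑ i, M i j = 1) :
    (∃! π : Fin n → ℝ,
        (∀ i, 0 ≤ π i) ∧ (∑ i, π i = 1) ∧ M.mulVec π = π) ∧
    (∀ π : Fin n → ℝ,
        (∀ i, 0 ≤ π i) → (∑ i, π i = 1) → M.mulVec π = π → ∀ i, 0 < π i) := by
  -- contraction constant
  haveI : NeZero n := ⟨hn.ne'⟩
  set c : ℝ := Finset.univ.inf' (by simp) (fun q : Fin n × Fin n => M q.1 q.2) with hcdef
  have hcpos : 0 < c := (Finset.lt_inf'_iff _).2 fun q _ => hM0 q.1 q.2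
  have hcle : ∀ i j, c ≤ M i j := fun i j => Finset.inf'_le _ (Finset.mem_univ (i, j))
  -- uniqueness of fixed points in the simplex
  have huniq : ∀ p q : Fin n → ℝ,
      ((∀ i, 0 ≤ p i) ∧ (∑ i, p i = 1) ∧ M.mulVec p = p) →
      ((∀ i, 0 ≤ q i) ∧ (∑ i, q i = 1) ∧ M.mulVec q = q) → p = q := by
    intro p q hp hq
    set x : Fin n → ℝ := fun j => p j - q j with hx
    have hsum0 : ∑ j, x j = 0 := by
      simp only [hx, Finset.sum_sub_distrib, hp.2.1, hq.2.1, sub_self]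
    have hMx : ∀ i, ∑ j, M i j * x j = x i := by
      intro i
      have hp' := congrFun hp.2.2 i
      have hq' := congrFun hq.2.2 i
      simp only [Matrix.mulVec, dotProduct] at hp' hq'
      simp only [hx, mul_sub, Finset.sum_sub_distrib, hp', hq']
    have hkey := key_ineq M c hcle hM1 x hsum0
    simp only [hMx] at hkey
    have hs0 : 0 ≤ ∑ j, |x j| := Finset.sum_nonneg fun j _ => abs_nonneg _
    have hncpos : 0 < (n : ℝ) * c := by positivity
    have hzero : ∑ j, |x j| = 0 := by nlinarith
    have : ∀ j, x j = 0 := by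
      intro j
      have := (Finset.sum_eq_zero_iff_of_nonneg fun j _ => abs_nonneg (x j)).1 hzero j
        (Finset.mem_univ j)
      exact abs_eq_zero.1 this
    funext j
    have := this j
    simp only [hx] at this
    linarith
  obtain ⟨π, hπ1, hπ2, hπ3⟩ := exists_statdist n hn M hM0 hM1
  constructor
  · exact ⟨π, ⟨hπ1, hπ2, hπ3⟩, fun q hq => huniq q π hq ⟨hπ1, hπ2, hπ3⟩⟩
  · intro p hp1 hp2 hp3 i
    -- some coordinate is positive
    have : ∃ j, 0 < p j := by
      by_contra h
      push_neg at h
      have : ∀ j ∈ Finset.univ, p j = 0 := fun j _ => le_antisymm (h j) (hp1 j)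
      rw [Finset.sum_eq_zero this] at hp2
      norm_num at hp2
    obtain ⟨j0, hj0⟩ := this
    have := congrFun hp3 i
    simp only [Matrix.mulVec, dotProduct] at this
    rw [← this]
    have : M i j0 * p j0 ≤ ∑ j, M i j * p j :=
      Finset.single_le_sum (fun j _ => mul_nonneg (hM0 i j).le (hp1 j)) (Finset.mem_univ j0)
    have hpos : 0 < M i j0 * p j0 := mul_pos (hM0 i j0) hj0
    linarith
end

section
/- The weighted Jaccard distance 1 - S_f(A,B), with S_f the weighted Jaccard similarity for a positive weight f, satisfies the triangle inequality on finite sets: 1 - S_f(A,C) ≤ (1 - S_f(A,B)) + (1 - S_f(B,C)). -/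
open scoped symmDiff


/-- The weighted Jaccard distance `1 - S_f` (with `S_f (∅, ∅) = 1`) satisfies the triangle
inequality on finite sets. -/
theorem stmt_13 {α : Type*} [DecidableEq α] (f : α → ℝ) (hf : ∀ t, 0 < f t)
    (S : Finset α → Finset α → ℝ)
    (hS : ∀ X Y : Finset α, S X Y =
      if X ∪ Y = ∅ then 1 else (∑ t ∈ X ∩ Y, f t) / (∑ t ∈ X ∪ Y, f t))
    (A B C : Finset α) :
    1 - S A C ≤ (1 - S A B) + (1 - S B C) := by
  set m : Finset α → ℝ := fun X => ∑ t ∈ X, f t with hm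
  have hnn : ∀ X : Finset α, 0 ≤ m X := fun X =>
    Finset.sum_nonneg fun t _ => (hf t).le
  have hmono : ∀ X Y : Finset α, X ⊆ Y → m X ≤ m Y := fun X Y h =>
    Finset.sum_le_sum_of_subset_of_nonneg h fun t _ _ => (hf t).le
  have hpos : ∀ X : Finset α, X ≠ ∅ → 0 < m X := by
    intro X hX
    obtain ⟨t, ht⟩ := Finset.nonempty_iff_ne_empty.mpr hX
    exact Finset.sum_pos' (fun t _ => (hf t).le) ⟨t, ht, hf t⟩
  have hui : ∀ X Y : Finset α, m (X ∪ Y) + m (X ∩ Y) = m X + m Y := fun X Y =>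
    Finset.sum_union_inter
  have hsd : ∀ X Y : Finset α, m (X ∆ Y) = m (X ∪ Y) - m (X ∩ Y) := by
    intro X Y
    have h1 : X ∆ Y = (X ∪ Y) \ (X ∩ Y) := symmDiff_eq_sup_sdiff_inf X Y
    have h2 := Finset.sum_sdiff (f := f) (Finset.inter_subset_union (s := X) (t := Y))
    rw [h1]
    simp only [hm]
    linarith [h2]
  have hd : ∀ X Y : Finset α, 1 - S X Y = 2 * m (X ∆ Y) / (m X + m Y + m (X ∆ Y)) := by
    intro X Y
    rw [hS]
    by_cases h : X ∪ Y = ∅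
    · have hX : X = ∅ := by
        have := Finset.union_eq_empty.mp h; exact this.1
      have hY : Y = ∅ := (Finset.union_eq_empty.mp h).2
      subst hX; subst hY
      simp [hm]
    · rw [if_neg h]
      have hu : 0 < m (X ∪ Y) := hpos _ h
      have h1 := hui X Y
      have h2 := hsd X Y
      have hden : m X + m Y + m (X ∆ Y) = 2 * m (X ∪ Y) := by linarith
      rw [hden, h2]
      have hu' : (m (X ∪ Y) : ℝ) ≠ 0 := ne_of_gt hu
      field_simp [hm]
      rw [show (∑ t ∈ X ∩ Y, f t) = m (X ∩ Y) from rfl, show (∑ t ∈ X ∪ Y, f t) = m (X ∪ Y) from rfl,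
        sub_mul, one_mul, div_mul_cancel₀ _ hu']
  rw [hd, hd, hd]
  set a := m (A ∆ C) with hadef
  set b := m (A ∆ B) with hbdef
  set c := m (B ∆ C) with hcdef
  set x := m A
  set y := m C
  set z := m B
  have hann : 0 ≤ a := hnn _
  have hbnn : 0 ≤ b := hnn _
  have hcnn : 0 ≤ c := hnn _
  have hxnn : 0 ≤ x := hnn _
  have hynn : 0 ≤ y := hnn _
  have hznn : 0 ≤ z := hnn _
  -- triangle inequality for the measure of symmetric differences
  have htri : a ≤ b + c := by
    have hsub : A ∆ C ⊆ (A ∆ B) ∪ (B ∆ C) := symmDiff_triangle A B C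
    have h1 : m (A ∆ C) ≤ m ((A ∆ B) ∪ (B ∆ C)) := hmono _ _ hsub
    have h2 : m ((A ∆ B) ∪ (B ∆ C)) + m ((A ∆ B) ∩ (B ∆ C)) = m (A ∆ B) + m (B ∆ C) :=
      hui _ _
    have h3 : 0 ≤ m ((A ∆ B) ∩ (B ∆ C)) := hnn _
    linarith
  -- z ≤ b + x and z ≤ c + y
  have hz1 : z ≤ b + x := by
    have h1 : m B ≤ m (A ∪ B) := hmono _ _ Finset.subset_union_right
    have h2 := hui A B
    have h3 := hsd A B
    have h4 : m (A ∩ B) ≤ m A := hmono _ _ Finset.inter_subset_left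
    simp only [hbdef]
    linarith
  have hz2 : z ≤ c + y := by
    have h1 : m B ≤ m (B ∪ C) := hmono _ _ Finset.subset_union_left
    have h2 := hui B C
    have h3 := hsd B C
    have h4 : m (B ∩ C) ≤ m C := hmono _ _ Finset.inter_subset_right
    simp only [hcdef]
    linarith
  by_cases hAC : A ∪ C = ∅
  · have hA : A = ∅ := (Finset.union_eq_empty.mp hAC).1
    have hC : C = ∅ := (Finset.union_eq_empty.mp hAC).2
    have ha0 : a = 0 := by
      simp only [hadef, hA, hC]
      simp [hm]
    rw [ha0]
    have t1 : 0 ≤ 2 * b / (x + z + b) := by positivity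
    have t2 : 0 ≤ 2 * c / (z + y + c) := by positivity
    simp only [mul_zero, zero_div]
    linarith
  -- main case
  have hs : 0 < x + y := by
    have := hpos _ hAC
    have h1 : m (A ∪ C) ≤ m A + m C := by
      have := hui A C
      have := hnn (A ∩ C)
      linarith
    linarith
  set T : ℝ := b + c + x + y with hT
  have hTpos : 0 < T := by simp only [hT]; linarith
  have h1 : 2 * a / (x + y + a) ≤ 2 * (b + c) / T := by
    rw [div_le_div_iff₀ (by linarith) hTpos]
    nlinarith [mul_nonneg hann hs.le]
  have h3 : 2 * b / T ≤ 2 * b / (x + z + b) := by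
    by_cases hb : b = 0
    · simp [hb]
    · have hbpos : 0 < b := lt_of_le_of_ne hbnn (Ne.symm hb)
      apply div_le_div_of_nonneg_left (by linarith) (by linarith)
      simp only [hT]; linarith
  have h4 : 2 * c / T ≤ 2 * c / (z + y + c) := by
    by_cases hc : c = 0
    · simp [hc]
    · have hcpos : 0 < c := lt_of_le_of_ne hcnn (Ne.symm hc)
      apply div_le_div_of_nonneg_left (by linarith) (by linarith)
      simp only [hT]; linarith
  have h2 : 2 * (b + c) / T = 2 * b / T + 2 * c / T := by ring
  linarith
end
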